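/- Let a ∈ ℝ, ℓ > 0, δ > 0, integers m, m', n ≥ 1 with m ≠ m', 0 < ε < 1/2 and K > 0, and let χ : ℝ → ℝ be continuously differentiable with 0 ≤ χ(x) ≤ 1 for all x, χ(x) = 1 for all x ∈ [ε, 1−ε], and |χ′(x)| ≤ K/ε for all x. Define ψ_{m,n}(x,y) = χ((x−a)/ℓ)·sin(πm(x−a)/ℓ)·sin(πny/δ) and similarly ψ_{m',n}. Then | ∫_{[a,a+ℓ]×[0,δ]} ψ_{m,n}(x,y)·ψ_{m',n}(x,y) dx dy | ≤ 4K·ℓ·δ/|m − m'|. -/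

import Mathlib

/-!
The integrand separates: `ψ ψ' = Φ((x - a)/ℓ) · sin²(π n y/δ)` with
`Φ t = χ(t)² sin(π m t) sin(π m' t)`, so by Fubini and the substitution `t = (x - a)/ℓ` the integral
is `ℓ ∫₀¹ Φ` times a `y`-integral of absolute value at most `δ`. Writing
`2 sin A sin B = cos(A - B) - cos(A + B)` reduces `∫₀¹ Φ` to integrals `∫₀¹ χ² cos(c t)` with
`c = π(m ∓ m')` a nonzero multiple of `π`. Integrating by parts, the boundary terms vanish because
`sin c = 0`, and `(χ²)' = 2χχ'` vanishes on `[ε, 1 - ε]` and is bounded by `2K/ε` elsewhere, so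
`|∫₀¹ χ² cos(c t)| ≤ 2ε · (2K/ε)/|c| = 4K/|c|`.
-/

open Real MeasureTheory intervalIntegral

structure IsSmoothCutoff (ε K : ℝ) (χ : ℝ → ℝ) : Prop where
  contDiff : ContDiff ℝ 1 χ
  nonneg : ∀ x, 0 ≤ χ x
  le_one : ∀ x, χ x ≤ 1
  eq_one : ∀ x ∈ Set.Icc ε (1 - ε), χ x = 1
  abs_deriv_le : ∀ x, |deriv χ x| ≤ K / ε

theorem integral_mul_cos_eq_neg_integral_mul_sin {u u' : ℝ → ℝ} {c : ℝ}
    (hu : ∀ t, HasDerivAt u (u' t) t) (hu' : IntervalIntegrable u' volume 0 1)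
    (hc : c ≠ 0) (hsin : sin c = 0) :
    ∫ t in (0 : ℝ)..1, u t * cos (c * t) = -(∫ t in (0 : ℝ)..1, u' t * sin (c * t)) / c := by
  have hv : ∀ t, HasDerivAt (fun s => sin (c * s) / c) (cos (c * t)) t := fun t => by
    simpa [hc] using (((hasDerivAt_id t).const_mul c).sin).div_const c
  have hcos : IntervalIntegrable (fun t => cos (c * t)) volume 0 1 :=
    (continuous_cos.comp (continuous_const_mul c)).intervalIntegrable _ _
  rw [integral_mul_deriv_eq_deriv_mul (fun t _ => hu t) (fun t _ => hv t) hu' hcos]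
  simp only [mul_one, mul_zero, sin_zero, hsin, zero_div, mul_div_assoc',
    intervalIntegral.integral_div]
  ring

theorem abs_integral_le_of_eq_zero_on_Icc {g : ℝ → ℝ} {ε M : ℝ} (hε : 0 ≤ ε) (hε' : ε ≤ 1 / 2)
    (hg : IntervalIntegrable g volume 0 1) (hM : ∀ t, |g t| ≤ M)
    (hzero : ∀ t ∈ Set.Icc ε (1 - ε), g t = 0) :
    |∫ t in (0 : ℝ)..1, g t| ≤ 2 * ε * M := by
  have hsub : ∀ {a b}, a ∈ Set.Icc (0 : ℝ) 1 → b ∈ Set.Icc (0 : ℝ) 1 →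
      IntervalIntegrable g volume a b := fun ha hb =>
    hg.mono_set (Set.uIcc_subset_uIcc (by simpa [Set.uIcc_of_le]) (by simpa [Set.uIcc_of_le]))
  have h0 : (0 : ℝ) ∈ Set.Icc (0 : ℝ) 1 := by simp
  have hε₁ : ε ∈ Set.Icc (0 : ℝ) 1 := ⟨hε, by linarith⟩
  have hε₂ : 1 - ε ∈ Set.Icc (0 : ℝ) 1 := ⟨by linarith, by linarith⟩
  have h1 : (1 : ℝ) ∈ Set.Icc (0 : ℝ) 1 := by simp
  have hmid : ∫ t in ε..(1 - ε), g t = 0 := by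
    refine (integral_congr fun t ht => ?_).trans integral_zero
    exact hzero t (by rwa [Set.uIcc_of_le (by linarith)] at ht)
  have hside : ∀ a b, |∫ t in a..b, g t| ≤ M * |b - a| := fun a b =>
    norm_integral_le_of_norm_le_const fun t _ => (norm_eq_abs _).trans_le (hM t)
  rw [← integral_add_adjacent_intervals (hsub h0 hε₂) (hsub hε₂ h1),
    ← integral_add_adjacent_intervals (hsub h0 hε₁) (hsub hε₁ hε₂), hmid, add_zero]
  calc |(∫ t in (0 : ℝ)..ε, g t) + ∫ t in (1 - ε)..1, g t|
      ≤ M * |ε - 0| + M * |1 - (1 - ε)| :=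
        (abs_add_le _ _).trans (add_le_add (hside _ _) (hside _ _))
    _ = 2 * ε * M := by rw [sub_zero, sub_sub_cancel, abs_of_nonneg hε]; ring

namespace IsSmoothCutoff

variable {ε K : ℝ} {χ : ℝ → ℝ}

theorem deriv_eq_zero (hχ : IsSmoothCutoff ε K χ) {t : ℝ} (ht : t ∈ Set.Icc ε (1 - ε)) :
    deriv χ t = 0 :=
  IsLocalMax.deriv_eq_zero <|
    Filter.Eventually.of_forall fun y => (hχ.eq_one t ht).symm ▸ hχ.le_one y

theorem abs_integral_sq_mul_cos_le (hχ : IsSmoothCutoff ε K χ) (hε : 0 < ε) (hε' : ε < 1 / 2)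
    {c : ℝ} (hc : c ≠ 0) (hsin : sin c = 0) :
    |∫ t in (0 : ℝ)..1, χ t ^ 2 * cos (c * t)| ≤ 4 * K / |c| := by
  have hd : Differentiable ℝ χ := hχ.contDiff.differentiable one_ne_zero
  have hu : ∀ t, HasDerivAt (fun s => χ s ^ 2) (2 * χ t * deriv χ t) t := fun t => by
    simpa [mul_comm, mul_left_comm] using (hd t).hasDerivAt.fun_pow 2
  have hu'c : Continuous fun t => 2 * χ t * deriv χ t :=
    (continuous_const.mul hχ.contDiff.continuous).mul (hχ.contDiff.continuous_deriv le_rfl)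
  have hbound : ∀ t, |2 * χ t * deriv χ t * sin (c * t)| ≤ 2 * (K / ε) := fun t => by
    rw [abs_mul, abs_mul, abs_mul, abs_two, abs_of_nonneg (hχ.nonneg t)]
    calc 2 * χ t * |deriv χ t| * |sin (c * t)| ≤ 2 * 1 * (K / ε) * 1 := by
          have hKε : 0 ≤ K / ε := (abs_nonneg _).trans (hχ.abs_deriv_le t)
          gcongr
          exacts [hχ.le_one t, hχ.abs_deriv_le t, abs_sin_le_one _]
      _ = 2 * (K / ε) := by ring
  have hg : |∫ t in (0 : ℝ)..1, 2 * χ t * deriv χ t * sin (c * t)| ≤ 2 * ε * (2 * (K / ε)) :=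
    abs_integral_le_of_eq_zero_on_Icc hε.le hε'.le
      ((hu'c.mul (continuous_sin.comp (continuous_const_mul c))).intervalIntegrable 0 1) hbound
      (fun t ht => by simp [hχ.deriv_eq_zero ht])
  rw [integral_mul_cos_eq_neg_integral_mul_sin hu (hu'c.intervalIntegrable 0 1) hc hsin,
    abs_div, abs_neg]
  calc |∫ t in (0 : ℝ)..1, 2 * χ t * deriv χ t * sin (c * t)| / |c|
      ≤ 2 * ε * (2 * (K / ε)) / |c| := by gcongr
    _ = 4 * K / |c| := by field_simp; ring

theorem abs_integral_sq_mul_sin_mul_sin_le (hχ : IsSmoothCutoff ε K χ) (hε : 0 < ε)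
    (hε' : ε < 1 / 2) (hK : 0 < K) {m m' : ℕ} (hmm' : m ≠ m') :
    |∫ t in (0 : ℝ)..1, χ t ^ 2 * (sin (π * m * t) * sin (π * m' * t))|
      ≤ 4 * K / (π * |(m : ℝ) - m'|) := by
  set c₁ := π * ((m : ℝ) - m')
  set c₂ := π * ((m : ℝ) + m')
  have hsin : ∀ k : ℤ, sin (π * k) = 0 := fun k => by rw [mul_comm, sin_int_mul_pi]
  have hc₁ : c₁ ≠ 0 := mul_ne_zero pi_ne_zero (sub_ne_zero.2 (Nat.cast_injective.ne hmm'))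
  have hc₂ : c₂ ≠ 0 := mul_ne_zero pi_ne_zero (by exact_mod_cast (by omega : m + m' ≠ 0))
  have hsin₁ : sin c₁ = 0 := by simpa using hsin ((m : ℤ) - m')
  have hsin₂ : sin c₂ = 0 := by simpa using hsin ((m : ℤ) + m')
  have hc₁₂ : |c₁| ≤ |c₂| := by
    have : (0 : ℝ) ≤ m := by positivity
    have : (0 : ℝ) ≤ m' := by positivity
    rw [abs_mul, abs_mul, abs_of_nonneg (by positivity : (0 : ℝ) ≤ m + m')]
    exact mul_le_mul_of_nonneg_left (abs_sub_le_iff.2 ⟨by linarith, by linarith⟩) (abs_nonneg π)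
  have hcos : ∀ c, IntervalIntegrable (fun t => χ t ^ 2 * cos (c * t)) volume 0 1 := fun c =>
    ((hχ.contDiff.continuous.pow 2).mul
      (continuous_cos.comp (continuous_const_mul c))).intervalIntegrable 0 1
  have hsum : ∫ t in (0 : ℝ)..1, χ t ^ 2 * (sin (π * m * t) * sin (π * m' * t))
      = ((∫ t in (0 : ℝ)..1, χ t ^ 2 * cos (c₁ * t))
        - ∫ t in (0 : ℝ)..1, χ t ^ 2 * cos (c₂ * t)) / 2 := by
    rw [← integral_sub (hcos c₁) (hcos c₂), ← intervalIntegral.integral_div]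
    refine integral_congr fun t _ => ?_
    simp only [c₁, c₂]
    rw [mul_sub, mul_add, sub_mul, add_mul, cos_sub, cos_add]
    ring
  have h₁ := hχ.abs_integral_sq_mul_cos_le hε hε' hc₁ hsin₁
  have h₂ := hχ.abs_integral_sq_mul_cos_le hε hε' hc₂ hsin₂
  have h₂₁ : 4 * K / |c₂| ≤ 4 * K / |c₁| := by gcongr
  rw [hsum, abs_div, abs_two]
  calc |(∫ t in (0 : ℝ)..1, χ t ^ 2 * cos (c₁ * t)) - ∫ t in (0 : ℝ)..1, χ t ^ 2 * cos (c₂ * t)| / 2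
      ≤ (4 * K / |c₁| + 4 * K / |c₁|) / 2 := by
        gcongr
        exact (abs_sub _ _).trans (add_le_add h₁ (h₂.trans h₂₁))
    _ = 4 * K / |c₁| := by ring
    _ = 4 * K / (π * |(m : ℝ) - m'|) := by simp only [c₁, abs_mul, abs_of_pos pi_pos]

end IsSmoothCutoff

theorem setIntegral_Icc_comp_sub_div (f : ℝ → ℝ) (a : ℝ) {ℓ : ℝ} (hℓ : 0 < ℓ) :
    ∫ x in Set.Icc a (a + ℓ), f ((x - a) / ℓ) = ℓ * ∫ t in (0 : ℝ)..1, f t := by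
  rw [integral_Icc_eq_integral_Ioc, ← integral_of_le (by linarith),
    integral_comp_sub_right (fun x => f (x / ℓ)), sub_self, add_sub_cancel_left,
    integral_comp_div f hℓ.ne', zero_div, div_self hℓ.ne', smul_eq_mul]

theorem stmt_15_general (a ℓ δ : ℝ) (hℓ : 0 < ℓ) (hδ : 0 < δ)
    (m m' n : ℕ) (hmm' : m ≠ m')
    (ε K : ℝ) (hε : 0 < ε) (hε' : ε < 1 / 2) (hK : 0 < K)
    (χ : ℝ → ℝ) (hχ_diff : ContDiff ℝ 1 χ)
    (hχ_nonneg : ∀ x, 0 ≤ χ x) (hχ_le : ∀ x, χ x ≤ 1)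
    (hχ_one : ∀ x ∈ Set.Icc ε (1 - ε), χ x = 1)
    (hχ' : ∀ x, |deriv χ x| ≤ K / ε)
    (ψ ψ' : ℝ → ℝ → ℝ)
    (hψ : ∀ x y, ψ x y =
      χ ((x - a) / ℓ) * Real.sin (π * m * (x - a) / ℓ) * Real.sin (π * n * y / δ))
    (hψ' : ∀ x y, ψ' x y =
      χ ((x - a) / ℓ) * Real.sin (π * m' * (x - a) / ℓ) * Real.sin (π * n * y / δ)) :
    |∫ z in Set.Icc a (a + ℓ) ×ˢ Set.Icc (0 : ℝ) δ, ψ z.1 z.2 * ψ' z.1 z.2|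
      ≤ 4 * K * ℓ * δ / |(m : ℝ) - (m' : ℝ)| := by
  have hχ : IsSmoothCutoff ε K χ := ⟨hχ_diff, hχ_nonneg, hχ_le, hχ_one, hχ'⟩
  set Φ : ℝ → ℝ := fun t => χ t ^ 2 * (sin (π * m * t) * sin (π * m' * t))
  have hsep : ∀ x y, ψ x y * ψ' x y = Φ ((x - a) / ℓ) * sin (π * n * y / δ) ^ 2 := by
    intro x y
    simp only [hψ, hψ', Φ, mul_div_assoc]
    ring
  have hx : |∫ x in Set.Icc a (a + ℓ), Φ ((x - a) / ℓ)| ≤ ℓ * (4 * K / (π * |(m : ℝ) - m'|)) := by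
    rw [setIntegral_Icc_comp_sub_div Φ a hℓ, abs_mul, abs_of_pos hℓ]
    exact mul_le_mul_of_nonneg_left (hχ.abs_integral_sq_mul_sin_mul_sin_le hε hε' hK hmm') hℓ.le
  have hy : |∫ y in Set.Icc (0 : ℝ) δ, sin (π * n * y / δ) ^ 2| ≤ δ := by
    simpa [hδ.le] using norm_setIntegral_le_of_norm_le_const (C := 1)
      (f := fun y => sin (π * n * y / δ) ^ 2) (measure_Icc_lt_top (μ := volume) (a := 0) (b := δ))
      fun y _ => by simpa using sin_sq_le_one (π * n * y / δ)
  have hgap : 0 < |(m : ℝ) - m'| := abs_pos.2 (sub_ne_zero.2 (Nat.cast_injective.ne hmm'))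
  simp_rw [hsep]
  rw [Measure.volume_eq_prod, setIntegral_prod_mul (fun x => Φ ((x - a) / ℓ))
    (fun y => sin (π * n * y / δ) ^ 2), abs_mul]
  calc _ ≤ ℓ * (4 * K / (π * |(m : ℝ) - m'|)) * δ := mul_le_mul hx hy (abs_nonneg _) (by positivity)
    _ ≤ ℓ * (4 * K / |(m : ℝ) - m'|) * δ := by gcongr; nlinarith [pi_gt_three]
    _ = 4 * K * ℓ * δ / |(m : ℝ) - (m' : ℝ)| := by ring

theorem stmt_15 (a ℓ δ : ℝ) (hℓ : 0 < ℓ) (hδ : 0 < δ)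
    (m m' n : ℕ) (hm : 1 ≤ m) (hm' : 1 ≤ m') (hn : 1 ≤ n) (hmm' : m ≠ m')
    (ε K : ℝ) (hε : 0 < ε) (hε' : ε < 1 / 2) (hK : 0 < K)
    (χ : ℝ → ℝ) (hχ_diff : ContDiff ℝ 1 χ)
    (hχ_nonneg : ∀ x, 0 ≤ χ x) (hχ_le : ∀ x, χ x ≤ 1)
    (hχ_one : ∀ x ∈ Set.Icc ε (1 - ε), χ x = 1)
    (hχ' : ∀ x, |deriv χ x| ≤ K / ε)
    (ψ ψ' : ℝ → ℝ → ℝ)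
    (hψ : ∀ x y, ψ x y =
      χ ((x - a) / ℓ) * Real.sin (π * m * (x - a) / ℓ) * Real.sin (π * n * y / δ))
    (hψ' : ∀ x y, ψ' x y =
      χ ((x - a) / ℓ) * Real.sin (π * m' * (x - a) / ℓ) * Real.sin (π * n * y / δ)) :
    |∫ z in Set.Icc a (a + ℓ) ×ˢ Set.Icc (0 : ℝ) δ, ψ z.1 z.2 * ψ' z.1 z.2|
      ≤ 4 * K * ℓ * δ / |(m : ℝ) - (m' : ℝ)| :=
  stmt_15_general a ℓ δ hℓ hδ m m' n hmm' ε K hε hε' hK χ hχ_diff hχ_nonneg hχ_le hχ_one hχ' ψ ψ' hψ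
    hψ'
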